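/- arXiv:2001.05252 — 2 statements merged into one kernel-verified Lean document; each statement's English description precedes it below -/
import Mathlib

section
/- For k ≥ 1, the k-th symmetric power of the standard representation of SL₂(ℂ) is an irreducible representation of SL₂(ℤ) (i.e., remains irreducible upon restriction to the subgroup SL₂(ℤ)). -/
open MvPolynomial Finset

/-- The action of `SL₂(ℤ)` (restricted from `SL₂(ℂ)`) on polynomials in two variables
by linear substitution. -/
noncomputable def slAct (g : Matrix.SpecialLinearGroup (Fin 2) ℤ)
    (P : MvPolynomial (Fin 2) ℂ) : MvPolynomial (Fin 2) ℂ :=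
  MvPolynomial.aeval (fun i : Fin 2 => ∑ j : Fin 2,
    (((g : Matrix (Fin 2) (Fin 2) ℤ) i j : ℤ) : ℂ) • MvPolynomial.X j) P

/-! ### Auxiliary definitions and lemmas -/

/-- The monomial `X₀^a X₁^(k-a)`. -/
noncomputable def slMon (k a : ℕ) : MvPolynomial (Fin 2) ℂ :=
  X 0 ^ a * X 1 ^ (k - a)

/-- Its exponent finsupp. -/
noncomputable def slExp (k a : ℕ) : Fin 2 →₀ ℕ :=
  Finsupp.single 0 a + Finsupp.single 1 (k - a)

lemma slMon_eq_monomial (k a : ℕ) : slMon k a = monomial (slExp k a) 1 := by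
  simp [slMon, slExp, X_pow_eq_monomial, monomial_mul]

lemma slExp_apply_zero (k a : ℕ) : slExp k a 0 = a := by
  simp [slExp]

lemma slExp_apply_one (k a : ℕ) : slExp k a 1 = k - a := by
  simp [slExp, Finsupp.single_apply]

lemma slDegree_eq (d : Fin 2 →₀ ℕ) : d.degree = d 0 + d 1 := by
  rw [Finsupp.degree, ← Fin.sum_univ_two (fun i => d i)]
  exact Finset.sum_subset (Finset.subset_univ _)
    (fun i _ hi => Finsupp.notMem_support_iff.mp hi)

lemma eq_slExp_of_degree {k : ℕ} {d : Fin 2 →₀ ℕ} (hd : d 0 + d 1 = k) :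
    d = slExp k (d 0) := by
  ext i
  fin_cases i
  · simpa using (slExp_apply_zero k (d 0)).symm
  · show d 1 = slExp k (d 0) 1
    rw [slExp_apply_one]; omega

/-- Decomposition of a homogeneous polynomial of degree `k` into monomials. -/
lemma homog_eq_sum {k : ℕ} {P : MvPolynomial (Fin 2) ℂ}
    (hP : P ∈ homogeneousSubmodule (Fin 2) ℂ k) :
    P = ∑ a ∈ Finset.range (k + 1), coeff (slExp k a) P • slMon k a := by
  rw [mem_homogeneousSubmodule] at hP
  apply MvPolynomial.ext
  intro d
  rw [coeff_sum]
  simp only [coeff_smul, slMon_eq_monomial, coeff_monomial, smul_eq_mul, mul_ite, mul_one,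
    mul_zero]
  by_cases hd : coeff d P = 0
  · rw [hd]
    refine (Finset.sum_eq_zero ?_).symm
    intro a _
    split_ifs with h
    · rw [h, hd]
    · rfl
  · have hdeg : d.degree = k := by
      by_contra h
      exact hd (IsHomogeneous.coeff_eq_zero hP h)
    rw [slDegree_eq] at hdeg
    have hde : d = slExp k (d 0) := eq_slExp_of_degree hdeg
    have hmem : d 0 ∈ Finset.range (k + 1) := by
      simp; omega
    rw [Finset.sum_eq_single (d 0)]
    · rw [if_pos hde.symm, ← hde]
    · intro a _ ha
      rw [if_neg]
      intro h
      apply ha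
      have := congrArg (fun f : Fin 2 →₀ ℕ => f 0) h
      simpa [slExp_apply_zero] using this
    · intro h; exact absurd hmem h

/-- From membership of Vandermonde-type combinations, deduce membership of components. -/
lemma mem_of_vandermonde_comb {N : ℕ} (p : Submodule ℂ (MvPolynomial (Fin 2) ℂ))
    (R : Fin N → MvPolynomial (Fin 2) ℂ)
    (h : ∀ n : Fin N, (∑ e : Fin N, ((n : ℕ) : ℂ) ^ (e : ℕ) • R e) ∈ p) :
    ∀ e, R e ∈ p := by
  intro e
  set M : Matrix (Fin N) (Fin N) ℂ := Matrix.vandermonde (fun n : Fin N => ((n : ℕ) : ℂ)) with hM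
  have hdet : IsUnit M.det := by
    rw [hM, Matrix.det_vandermonde]
    apply isUnit_iff_ne_zero.mpr
    apply Finset.prod_ne_zero_iff.mpr
    intro i _
    apply Finset.prod_ne_zero_iff.mpr
    intro j hj
    have hij : (i : ℕ) < (j : ℕ) := Fin.lt_iff_val_lt_val.mp (Finset.mem_Ioi.mp hj)
    have : ((i : ℕ) : ℂ) ≠ ((j : ℕ) : ℂ) := by
      exact_mod_cast Nat.ne_of_lt hij
    intro hc
    apply this
    linear_combination -hc
  have hinv : M⁻¹ * M = 1 := Matrix.nonsing_inv_mul M hdet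
  have key : R e = ∑ n : Fin N, M⁻¹ e n • (∑ l : Fin N, M n l • R l) := by
    simp_rw [Finset.smul_sum, smul_smul]
    rw [Finset.sum_comm]
    simp_rw [← Finset.sum_smul]
    have : ∀ l, (∑ n : Fin N, M⁻¹ e n * M n l) • R l = (if e = l then (1:ℂ) else 0) • R l := by
      intro l
      congr 1
      have := congrFun (congrFun hinv e) l
      rw [Matrix.mul_apply] at this
      rw [this, Matrix.one_apply]
    simp_rw [this]
    simp
  rw [key]
  exact Submodule.sum_mem p (fun n _ => Submodule.smul_mem p _ (by
    have := h n
    simpa [hM, Matrix.vandermonde] using this))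

/-- Upper unipotent element of `SL₂(ℤ)`. -/
def gT (n : ℤ) : Matrix.SpecialLinearGroup (Fin 2) ℤ :=
  ⟨!![1, n; 0, 1], by simp [Matrix.det_fin_two_of]⟩

/-- Lower unipotent element of `SL₂(ℤ)`. -/
def gS (n : ℤ) : Matrix.SpecialLinearGroup (Fin 2) ℤ :=
  ⟨!![1, 0; n, 1], by simp [Matrix.det_fin_two_of]⟩

lemma slAct_gT_mon (n : ℤ) {k a : ℕ} (ha : a ≤ k) :
    slAct (gT n) (slMon k a) =
      ∑ m ∈ Finset.range (k + 1),
        ((n : ℂ)) ^ m • ((a.choose m : ℂ) • slMon k (a - m)) := by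
  have h0 : slAct (gT n) (X 0) = (n : ℂ) • X 1 + X 0 := by
    simp [slAct, gT, Fin.sum_univ_two]
    ring
  have h1 : slAct (gT n) (X 1) = X 1 := by
    simp [slAct, gT, Fin.sum_univ_two]
  have hact : slAct (gT n) (slMon k a) = ((n : ℂ) • X 1 + X 0) ^ a * X 1 ^ (k - a) := by
    simp only [slMon, slAct, map_mul, map_pow]
    rw [← slAct, ← slAct, h0, h1]
  rw [hact, add_pow, Finset.sum_mul]
  rw [← Finset.sum_subset (Finset.range_subset_range.mpr (by omega : a + 1 ≤ k + 1))]
  · apply Finset.sum_congr rfl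
    intro m hm
    have hma : m ≤ a := by simp at hm; omega
    have hpow : (X 1 : MvPolynomial (Fin 2) ℂ) ^ (k - (a - m)) = X 1 ^ m * X 1 ^ (k - a) := by
      rw [← pow_add]; congr 1; omega
    rw [slMon, hpow, smul_pow, MvPolynomial.smul_eq_C_mul, MvPolynomial.smul_eq_C_mul,
      MvPolynomial.smul_eq_C_mul, ← MvPolynomial.C_eq_coe_nat]
    ring
  · intro m hm hma
    have : a < m := by simp at hm hma ⊢; omega
    rw [Nat.choose_eq_zero_of_lt this]
    simp

lemma slAct_gS_mon0 (n : ℤ) (k : ℕ) :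
    slAct (gS n) (slMon k 0) =
      ∑ m ∈ Finset.range (k + 1), ((n : ℂ)) ^ m • ((k.choose m : ℂ) • slMon k m) := by
  have h1 : slAct (gS n) (X 1) = (n : ℂ) • X 0 + X 1 := by
    simp [slAct, gS, Fin.sum_univ_two]
  have hact : slAct (gS n) (slMon k 0) = ((n : ℂ) • X 0 + X 1) ^ k := by
    simp only [slMon, pow_zero, one_mul, Nat.sub_zero, slAct, map_pow]
    rw [← slAct, h1]
  rw [hact, add_pow]
  apply Finset.sum_congr rfl
  intro m hm
  rw [slMon, smul_pow, MvPolynomial.smul_eq_C_mul, MvPolynomial.smul_eq_C_mul,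
    MvPolynomial.smul_eq_C_mul, ← MvPolynomial.C_eq_coe_nat]
  ring

/-- For `k ≥ 1`, the `k`-th symmetric power of the standard representation of
`SL₂(ℂ)` (realized as the space of degree-`k` homogeneous polynomials in two
variables) remains irreducible as a representation of the subgroup `SL₂(ℤ)`:
any `SL₂(ℤ)`-stable subspace is zero or everything. -/
theorem symPow_standard_irreducible_as_SL2Z_rep
    (k : ℕ) (hk : 1 ≤ k)
    (p : Submodule ℂ (MvPolynomial (Fin 2) ℂ))
    (hple : p ≤ MvPolynomial.homogeneousSubmodule (Fin 2) ℂ k)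
    (hstable : ∀ g : Matrix.SpecialLinearGroup (Fin 2) ℤ, ∀ P ∈ p, slAct g P ∈ p) :
    p = ⊥ ∨ p = MvPolynomial.homogeneousSubmodule (Fin 2) ℂ k := by
  by_cases hbot : p = ⊥
  · exact Or.inl hbot
  right
  obtain ⟨P, hPp, hP0⟩ := Submodule.ne_bot_iff p |>.mp hbot
  set c : ℕ → ℂ := fun a => coeff (slExp k a) P with hc
  have hPd : P = ∑ a ∈ Finset.range (k + 1), c a • slMon k a := homog_eq_sum (hple hPp)
  -- the components of the action of the upper unipotents on P
  set Rf : ℕ → MvPolynomial (Fin 2) ℂ :=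
    fun e => ∑ a ∈ Finset.range (k + 1), c a • ((a.choose e : ℂ) • slMon k (a - e)) with hRf
  -- Step 1 : each Rf e lies in p, by the Vandermonde argument
  have hRmem : ∀ e : Fin (k + 1), Rf (e : ℕ) ∈ p := by
    apply mem_of_vandermonde_comb
    intro n
    have hact : slAct (gT ((n : ℕ) : ℤ)) P
        = ∑ e : Fin (k + 1), ((n : ℕ) : ℂ) ^ (e : ℕ) • Rf (e : ℕ) := by
      rw [Fin.sum_univ_eq_sum_range (fun m => ((n : ℕ) : ℂ) ^ m • Rf m) (k + 1)]
      conv_lhs => rw [hPd]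
      rw [slAct, map_sum]
      simp_rw [map_smul]
      have hterm : ∀ a ∈ Finset.range (k + 1),
          c a • (aeval fun i : Fin 2 => ∑ j : Fin 2,
            ((((gT ((n : ℕ) : ℤ)) : Matrix (Fin 2) (Fin 2) ℤ) i j : ℤ) : ℂ) • X j) (slMon k a)
          = c a • ∑ m ∈ Finset.range (k + 1),
              ((n : ℕ) : ℂ) ^ m • ((a.choose m : ℂ) • slMon k (a - m)) := by
        intro a ha
        rw [← slAct, slAct_gT_mon _ (by simp at ha; omega)]
        push_cast
        rfl
      rw [Finset.sum_congr rfl hterm]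
      simp_rw [Finset.smul_sum, smul_smul]
      rw [Finset.sum_comm]
      apply Finset.sum_congr rfl
      intro m _
      rw [hRf, Finset.smul_sum]
      apply Finset.sum_congr rfl
      intro a _
      rw [smul_smul, smul_smul]
      congr 1
      ring
    rw [← hact]
    exact hstable _ _ hPp
  -- Step 1' : the bottom monomial X₁ᵏ = slMon k 0 lies in p
  have hmon0 : slMon k 0 ∈ p := by
    set s : Finset ℕ := (Finset.range (k + 1)).filter (fun a => c a ≠ 0) with hs
    have hsne : s.Nonempty := by
      by_contra hne
      apply hP0
      rw [hPd]
      apply Finset.sum_eq_zero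
      intro a ha
      have : c a = 0 := by
        by_contra hca
        exact hne ⟨a, Finset.mem_filter.mpr ⟨ha, hca⟩⟩
      rw [this, zero_smul]
    set mx : ℕ := s.max' hsne with hmx
    have hmxs : mx ∈ s := s.max'_mem hsne
    have hmxk : mx ≤ k := by
      have := (Finset.mem_filter.mp hmxs).1
      simp at this; omega
    have hcmx : c mx ≠ 0 := (Finset.mem_filter.mp hmxs).2
    have hRmx : Rf mx = c mx • slMon k 0 := by
      show (∑ a ∈ Finset.range (k + 1), c a • ((a.choose mx : ℂ) • slMon k (a - mx)))
        = c mx • slMon k 0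
      rw [Finset.sum_eq_single mx]
      · rw [Nat.choose_self, Nat.sub_self, Nat.cast_one, one_smul]
      · intro a ha hamx
        rcases lt_or_gt_of_ne hamx with hlt | hgt
        · rw [Nat.choose_eq_zero_of_lt hlt]
          simp
        · have : c a = 0 := by
            by_contra hca
            have : a ∈ s := Finset.mem_filter.mpr ⟨ha, hca⟩
            have := s.le_max' a this
            omega
          rw [this, zero_smul]
      · intro h
        exact absurd (by simp; omega : mx ∈ Finset.range (k + 1)) h
    have : Rf mx ∈ p := by
      have := hRmem ⟨mx, by omega⟩
      simpa using this
    have h2 : (c mx)⁻¹ • Rf mx ∈ p := Submodule.smul_mem p _ this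
    rwa [hRmx, smul_smul, inv_mul_cancel₀ hcmx, one_smul] at h2
  -- Step 2 : every monomial slMon k m lies in p
  have hmonall : ∀ m, m ≤ k → slMon k m ∈ p := by
    have hR2 : ∀ e : Fin (k + 1), ((k.choose (e : ℕ) : ℂ) • slMon k (e : ℕ)) ∈ p := by
      apply mem_of_vandermonde_comb
      intro n
      have hact : slAct (gS ((n : ℕ) : ℤ)) (slMon k 0)
          = ∑ e : Fin (k + 1), ((n : ℕ) : ℂ) ^ (e : ℕ) • ((k.choose (e : ℕ) : ℂ) • slMon k (e : ℕ)) := by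
        rw [Fin.sum_univ_eq_sum_range
          (fun m => ((n : ℕ) : ℂ) ^ m • ((k.choose m : ℂ) • slMon k m)) (k + 1)]
        rw [slAct_gS_mon0]
        push_cast
        rfl
      rw [← hact]
      exact hstable _ _ hmon0
    intro m hm
    have := hR2 ⟨m, by omega⟩
    simp only at this
    have hch : (k.choose m : ℂ) ≠ 0 := by
      exact_mod_cast (Nat.choose_pos hm).ne' 
    have h2 : (k.choose m : ℂ)⁻¹ • ((k.choose m : ℂ) • slMon k m) ∈ p :=
      Submodule.smul_mem p _ this
    rwa [smul_smul, inv_mul_cancel₀ hch, one_smul] at h2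
  -- Step 3 : conclude
  apply le_antisymm hple
  intro Q hQ
  rw [homog_eq_sum hQ]
  apply Submodule.sum_mem
  intro a ha
  exact Submodule.smul_mem p _ (hmonall a (by simp at ha; omega))
end

section
/- Bol's identity: for a nonnegative integer k and a holomorphic (or smooth, or formally differentiable) function f of a variable τ, the (k+1)-st derivative intertwines the weight −k and weight k+2 slash actions of SL₂: for γ = (a b; c d) with ad−bc=1, d^{k+1}/dτ^{k+1} [ (cτ+d)^k f(γτ) ] = (cτ+d)^{−k−2} f^{(k+1)}(γτ), where γτ = (aτ+b)/(cτ+d). -/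
/-!
Induct on `k`, writing `w = cτ + d`, `γτ = (aτ + b)/(cτ + d)` and `h = w^k · f∘γ`.
Since `w` is affine, Leibniz' rule collapses to
`D^{k+2}(w h) = w D^{k+2} h + (k+2) c D^{k+1} h`.
By induction `D^{k+1} h = w^{-(k+2)} · f^{(k+1)}∘γ` near `τ`, and `γ' = w^{-2}`
(this is where `ad - bc = 1` enters) gives
`D(w^m · g∘γ) = m c w^{m-1} · g∘γ + w^{m-2} · g'∘γ`.
Differentiating once more, the two terms in `f^{(k+1)}∘γ` cancel and only
`w^{-(k+3)} · f^{(k+2)}∘γ` survives.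
-/

open Filter Topology

theorem iteratedDeriv_succ_affine_mul {𝕜 : Type*} [NontriviallyNormedField 𝕜] {n : ℕ}
    {h : 𝕜 → 𝕜} {x : 𝕜} (hh : ContDiffAt 𝕜 (n + 1) h x) (c d : 𝕜) :
    iteratedDeriv (n + 1) (fun z => (c * z + d) * h z) x =
      (c * x + d) * iteratedDeriv (n + 1) h x + (n + 1) * c * iteratedDeriv n h x := by
  have affine : ∀ i, iteratedDeriv (i + 2) (fun z : 𝕜 => c * z + d) x = 0 := by
    simp [iteratedDeriv_succ']
  rw [iteratedDeriv_fun_mul (by fun_prop) hh, Finset.sum_range_succ', Finset.sum_range_succ']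
  simp only [affine, mul_zero, Nat.reduceSubDiff, zero_mul, Finset.sum_const_zero, zero_add,
    Nat.choose_one_right, Nat.cast_add, Nat.cast_one, iteratedDeriv_one, deriv_add_const',
    deriv_const_mul_id', add_tsub_cancel_right, Nat.choose_zero_right, iteratedDeriv_zero,
    one_mul, tsub_zero]
  ring

section Mobius

variable {𝕜 : Type*} [NontriviallyNormedField 𝕜] {a b c d τ : 𝕜}

theorem hasDerivAt_mobius (hdet : a * d - b * c = 1) (hτ : c * τ + d ≠ 0) :
    HasDerivAt (fun z => (a * z + b) / (c * z + d)) ((c * τ + d) ^ 2)⁻¹ τ := by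
  refine ((((hasDerivAt_id' τ).const_mul a).add_const b).fun_div
    (((hasDerivAt_id' τ).const_mul c).add_const d) hτ).congr_deriv ?_
  rw [inv_eq_one_div]
  congr 1
  linear_combination hdet

theorem hasDerivAt_zpow_mul_comp_mobius (hdet : a * d - b * c = 1) (hτ : c * τ + d ≠ 0)
    (m : ℤ) {g : 𝕜 → 𝕜} (hg : DifferentiableAt 𝕜 g ((a * τ + b) / (c * τ + d))) :
    HasDerivAt (fun z => (c * z + d) ^ m * g ((a * z + b) / (c * z + d)))
      (m * c * (c * τ + d) ^ (m - 1) * g ((a * τ + b) / (c * τ + d)) +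
        (c * τ + d) ^ (m - 2) * deriv g ((a * τ + b) / (c * τ + d))) τ := by
  have hw := (hasDerivAt_zpow m (c * τ + d) (Or.inl hτ)).comp τ
    (((hasDerivAt_id' τ).const_mul c).add_const d)
  refine (hw.fun_mul (hg.hasDerivAt.comp τ (hasDerivAt_mobius hdet hτ))).congr_deriv ?_
  simp only [Function.comp, mul_one, zpow_sub₀ hτ, zpow_one, zpow_two]
  field_simp

end Mobius

/-- **Bol's identity.** For a holomorphic function `f` and a Möbius transformation of
determinant one, the `(k+1)`-st derivative intertwines the weight `−k` and weight
`k+2` slash actions: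
`d^{k+1}/dτ^{k+1} [(cτ+d)^k f(γτ)] = (cτ+d)^{−(k+2)} f^{(k+1)}(γτ)`. -/
theorem bol_identity (k : ℕ) (f : ℂ → ℂ) (hf : Differentiable ℂ f)
    (a b c d : ℂ) (hdet : a * d - b * c = 1) (τ : ℂ) (hτ : c * τ + d ≠ 0) :
    iteratedDeriv (k + 1) (fun z => (c * z + d) ^ k * f ((a * z + b) / (c * z + d))) τ =
      ((c * τ + d) ^ (k + 2))⁻¹ * iteratedDeriv (k + 1) f ((a * τ + b) / (c * τ + d)) := by
  induction k generalizing τ with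
  | zero => simpa using (hasDerivAt_zpow_mul_comp_mobius hdet hτ 0 (hf _)).deriv
  | succ k ih =>
    have hsplit : (fun z => (c * z + d) ^ (k + 1) * f ((a * z + b) / (c * z + d))) =
        fun z => (c * z + d) * ((c * z + d) ^ k * f ((a * z + b) / (c * z + d))) := by
      ext z
      ring
    have hsmooth : ContDiffAt ℂ (k + 2)
        (fun z => (c * z + d) ^ k * f ((a * z + b) / (c * z + d))) τ := by
      have := hf.contDiff (n := k + 2)
      fun_prop (disch := assumption)
    have hih : iteratedDeriv (k + 1) (fun z => (c * z + d) ^ k * f ((a * z + b) / (c * z + d)))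
        =ᶠ[𝓝 τ] fun z => (c * z + d) ^ (-((k + 2 : ℕ) : ℤ)) *
          iteratedDeriv (k + 1) f ((a * z + b) / (c * z + d)) := by
      have hw : Continuous fun z => c * z + d := by fun_prop
      filter_upwards [hw.continuousAt.eventually_ne hτ] with z hz
      rw [ih z hz, zpow_neg, zpow_natCast]
    have hD := hasDerivAt_zpow_mul_comp_mobius hdet hτ (-((k + 2 : ℕ) : ℤ))
      ((hf.contDiff (n := k + 2)).differentiable_iteratedDeriv' (k + 1) _)
    rw [hsplit, iteratedDeriv_succ_affine_mul hsmooth, iteratedDeriv_succ, hih.deriv_eq, hD.deriv,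
      ih τ hτ, ← iteratedDeriv_succ, zpow_sub₀ hτ, zpow_sub₀ hτ, zpow_neg, zpow_natCast]
    push_cast
    field_simp
    ring
end
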